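/- arXiv:math/0503699 — 4 statements merged into one kernel-verified Lean document; each statement's English description precedes it below -/
import Mathlib

section
/- Let D be a divisor on a nonsingular projective surface X with D² > 0. Then for any divisor E on X, (D²)(E²) ≤ (D.E)². -/
/-!
For `F := (D²) E - (D.E) D`, which is orthogonal to `D`, one has `F² = D² ((D²)(E²) - (D.E)²)`,
so it suffices that the pairing is negative semidefinite on `D^⊥`. By the Hodge index theorem it
is negative semidefinite on the hyperplane `x₀ = 0`; if some `F ⊥ D` had `F² > 0`, then the
combination of `D` and `F` lying in that hyperplane would have positive square.
-/

open LinearMap (BilinForm)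

namespace LinearMap

namespace BilinForm

section Diagonal

variable {R M ι : Type*} [CommSemiring R] [AddCommMonoid M] [Module R M] [Fintype ι]
  (B : BilinForm R M) (e : Module.Basis ι R M)

theorem apply_eq_sum_of_iIsOrtho (he : B.iIsOrtho e) (x y : M) :
    B x y = ∑ i, e.repr x i * e.repr y i * B (e i) (e i) := by
  conv_lhs => rw [← e.sum_repr x, ← e.sum_repr y]
  simp only [map_sum, map_smul, LinearMap.sum_apply, LinearMap.smul_apply, smul_eq_mul,
    Finset.mul_sum]
  refine Finset.sum_congr rfl fun j _ => ?_
  rw [Finset.sum_eq_single j (fun i _ hij => by rw [iIsOrtho_def.mp he i j hij]; ring)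
    (by simp)]
  ring

end Diagonal

variable {R M : Type*} [CommRing R] [LinearOrder R] [IsStrictOrderedRing R]
  [AddCommGroup M] [Module R M] {B : BilinForm R M}

theorem apply_self_nonpos_of_repr_eq_zero {ι : Type*} [Fintype ι] (e : Module.Basis ι R M)
    (he : B.iIsOrtho e) (i₀ : ι) (hneg : ∀ i, i ≠ i₀ → B (e i) (e i) ≤ 0) {x : M}
    (hx : e.repr x i₀ = 0) : B x x ≤ 0 := by
  rw [apply_eq_sum_of_iIsOrtho B e he]
  refine Finset.sum_nonpos fun i _ => ?_
  obtain rfl | hi := eq_or_ne i i₀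
  · simp [hx]
  · exact mul_nonpos_of_nonneg_of_nonpos (mul_self_nonneg _) (hneg i hi)

namespace IsSymm

variable (hB : B.IsSymm)
include hB

theorem apply_self_nonpos_of_apply_eq_zero (φ : M →ₗ[R] R) (hφ : ∀ x, φ x = 0 → B x x ≤ 0)
    {D F : M} (hD : 0 < B D D) (hDF : B D F = 0) : B F F ≤ 0 := by
  have hφD : φ D ≠ 0 := fun h => (hφ D h).not_gt hD
  have hFD : B F D = 0 := by rw [hB.eq, hDF]
  -- `G` is the point where the plane spanned by `D` and `F` meets `ker φ`
  set G := φ D • F - φ F • D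
  have hG : B G G = φ D ^ 2 * B F F + φ F ^ 2 * B D D := by
    simp only [G, map_sub, map_smul, LinearMap.sub_apply, LinearMap.smul_apply, smul_eq_mul,
      hFD, hDF]
    ring
  have hGker : φ G = 0 := by simp only [G, map_sub, map_smul, smul_eq_mul]; ring
  have : φ D ^ 2 * B F F ≤ 0 := by
    linarith [hG ▸ hφ G hGker, mul_nonneg (sq_nonneg (φ F)) hD.le]
  exact nonpos_of_mul_nonpos_right this (pow_two_pos_of_ne_zero hφD)

theorem apply_self_mul_apply_self_le_sq {D : M} (hD : 0 < B D D)
    (hneg : ∀ F, B D F = 0 → B F F ≤ 0) (E : M) : B D D * B E E ≤ B D E ^ 2 := by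
  -- the projection of `E` to the orthogonal complement of `D`, scaled by `B D D`
  set F := B D D • E - B D E • D
  have hDF : B D F = 0 := by
    simp only [F, map_sub, map_smul, smul_eq_mul]; ring
  have hF : B F F = B D D * (B D D * B E E - B D E ^ 2) := by
    simp only [F, map_sub, map_smul, LinearMap.sub_apply, LinearMap.smul_apply, smul_eq_mul,
      hB.eq E D]
    ring
  have := nonpos_of_mul_nonpos_right (hF ▸ hneg F hDF) hD
  linarith

end IsSymm

end BilinForm

end LinearMap

/-- `V` models `Num(X) ⊗ ℝ` and `B` the intersection pairing; `hodge` is the Hodge index theorem,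
the signature `(1, ρ - 1)` of `B`. -/
theorem stmt_3 {V : Type*} [AddCommGroup V] [Module ℝ V]
    (B : LinearMap.BilinForm ℝ V)
    (hsymm : ∀ x y, B x y = B y x)
    (hodge : ∃ (n : ℕ) (e : Module.Basis (Fin n) ℝ V),
      (∀ i j : Fin n, i ≠ j → B (e i) (e j) = 0) ∧
      (∀ i : Fin n, (i : ℕ) = 0 → B (e i) (e i) = 1) ∧
      (∀ i : Fin n, (i : ℕ) ≠ 0 → B (e i) (e i) = -1))
    (D E : V) (hD : 0 < B D D) :
    B D D * B E E ≤ (B D E) ^ 2 := by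
  obtain ⟨n, e, hoff, -, hminus⟩ := hodge
  have he : B.iIsOrtho e := BilinForm.iIsOrtho_def.mpr hoff
  have hB : B.IsSymm := BilinForm.isSymm_def.mpr hsymm
  cases n with
  | zero =>
    rw [BilinForm.apply_eq_sum_of_iIsOrtho B e he, Finset.univ_eq_empty, Finset.sum_empty] at hD
    exact (lt_irrefl 0 hD).elim
  | succ n =>
    have hker (x : V) (hx : e.coord 0 x = 0) : B x x ≤ 0 :=
      BilinForm.apply_self_nonpos_of_repr_eq_zero e he 0
        (fun i hi => (hminus i (Fin.val_ne_iff.mpr hi)).trans_le (by norm_num)) hx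
    exact hB.apply_self_mul_apply_self_le_sq hD
      (fun F hDF => hB.apply_self_nonpos_of_apply_eq_zero (e.coord 0) hker hD hDF) E
end

section
/- Let X be a nonsingular projective variety of dimension q and let D_1, …, D_r be divisors on X such that D_i^q > 0 for all i and all q-fold intersection numbers D_{i_1}.D_{i_2}.…D_{i_q} are nonnegative. Then there exist real numbers a_1, …, a_r > 0 such that, setting D' = ∑ a_i D_i, one has a_i D_i.(D')^{q−1} = (D')^q / r for every i. -/
/-!
Minimise `F(a) = (∑ e^{a_j} D_j)^q - l ∑ a_j` over all of `ℝ^r`: this is the paper's Lagrange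
problem on `∑ a_j = 0` with the multiplier fixed in advance, which is harmless because the
intersection form is homogeneous. Nonnegativity of the intersection numbers gives
`F(a) ≥ ∑ (D_j^q e^{q a_j} - l a_j) ≥ l ∑ |a_j|` once `2 l ≤ q D_j^q`, so `F` attains its minimum.
There `∂F/∂a_i = q e^{a_i} D_i.(D')^{q-1} - l = 0` with `D' = ∑ e^{a_j} D_j`, so every
`e^{a_i} D_i.(D')^{q-1}` equals `l / q`, and summing over `i` gives `(D')^q = r l / q`.
-/

open Function Finset

namespace MultilinearMap

section Algebra

variable {R ι κ M N : Type*} [CommSemiring R] [AddCommMonoid M] [Module R M]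
  [AddCommMonoid N] [Module R N] [DecidableEq ι]

theorem map_sum_smul [Fintype ι] [Fintype κ] (B : MultilinearMap R (fun _ : ι => M) N)
    (b : ι → κ → R) (D : κ → M) :
    B (fun k => ∑ j, b k j • D j) = ∑ f : ι → κ, (∏ k, b k (f k)) • B (fun k => D (f k)) := by
  rw [map_sum]
  exact sum_congr rfl fun f _ => map_smul_univ B (fun k => b k (f k)) _

theorem map_update_const_eq_of_symm {B : MultilinearMap R (fun _ : ι => M) N}
    (hB : ∀ (σ : Equiv.Perm ι) (v : ι → M), B (v ∘ σ) = B v) (x y : M) (k l : ι) :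
    B (update (fun _ => x) k y) = B (update (fun _ => x) l y) := by
  rw [← hB (Equiv.swap k l)]
  congr 1
  ext j
  simp only [comp_apply, update_apply, Equiv.swap_apply_def]
  split_ifs <;> simp_all

theorem sum_map_update_const_of_symm [Fintype ι] {B : MultilinearMap R (fun _ : ι => M) N}
    (hB : ∀ (σ : Equiv.Perm ι) (v : ι → M), B (v ∘ σ) = B v) (x y : M) (l : ι) :
    ∑ k, B (update (fun _ => x) k y) = Fintype.card ι • B (update (fun _ => x) l y) := by
  rw [sum_congr rfl fun k _ => map_update_const_eq_of_symm hB x y k l, sum_const, card_univ]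

theorem map_const_sum_eq_sum_map_update {κ : Type*} [Fintype κ]
    (B : MultilinearMap R (fun _ : ι => M) N) (v : κ → M) (l : ι) :
    B (fun _ => ∑ i, v i) = ∑ i, B (update (fun _ => ∑ j, v j) l (v i)) := by
  rw [← map_update_sum, update_eq_self]

end Algebra

variable {ι κ V : Type*} [Fintype ι] [DecidableEq ι] [Fintype κ] [AddCommGroup V] [Module ℝ V]

theorem continuous_of_pi (C : MultilinearMap ℝ (fun _ : ι => κ → ℝ) ℝ) : Continuous C := by
  classical
  have hC : ⇑C = fun m => ∑ f : ι → κ, (∏ k, m k (f k)) • C (fun k => Pi.single (f k) 1) := by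
    ext m
    rw [← map_sum_smul C m fun j => Pi.single j 1]
    congr 1
    ext k j
    simp [Finset.sum_apply, Pi.single_apply]
  rw [hC]
  fun_prop

theorem sum_pow_mul_le_map_const_sum_smul [Nonempty ι] (B : MultilinearMap ℝ (fun _ : ι => V) ℝ)
    (D : κ → V) (hB : ∀ f : ι → κ, 0 ≤ B (fun k => D (f k))) {b : κ → ℝ} (hb : ∀ j, 0 ≤ b j) :
    ∑ j, b j ^ Fintype.card ι * B (fun _ => D j) ≤ B (fun _ => ∑ j, b j • D j) := by
  rw [map_sum_smul B (fun _ => b)]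
  have hconst : ∑ j, b j ^ Fintype.card ι * B (fun _ => D j) =
      ∑ f ∈ univ.map ⟨const ι, const_injective⟩, (∏ k, b (f k)) • B (fun k => D (f k)) := by
    simp [prod_const]
  rw [hconst]
  exact sum_le_sum_of_subset_of_nonneg (subset_univ _) fun f _ _ =>
    smul_nonneg (prod_nonneg fun k _ => hb (f k)) (hB f)

theorem continuous_map_const_comp (B : MultilinearMap ℝ (fun _ : ι => V) ℝ)
    (L : (κ → ℝ) →ₗ[ℝ] V) : Continuous fun b => B (fun _ => L b) :=
  (continuous_of_pi (B.compLinearMap fun _ => L)).comp (continuous_pi fun _ => continuous_id)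

theorem hasDerivAt_map_const_comp (B : MultilinearMap ℝ (fun _ : ι => V) ℝ)
    (L : (κ → ℝ) →ₗ[ℝ] V) {γ : ℝ → κ → ℝ} {v : κ → ℝ} {t : ℝ} (hγ : HasDerivAt γ v t) :
    HasDerivAt (fun s => B (fun _ => L (γ s))) (∑ k, B (update (fun _ => L (γ t)) k (L v))) t := by
  let C : ContinuousMultilinearMap ℝ (fun _ : ι => κ → ℝ) ℝ :=
    ⟨B.compLinearMap fun _ => L, continuous_of_pi _⟩
  have hdiag : HasDerivAt (fun s (_ : ι) => γ s) (fun _ => v) t := hasDerivAt_pi.2 fun _ => hγ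
  refine ((C.hasFDerivAt fun _ => γ t).comp_hasDerivAt t hdiag).congr_deriv ?_
  rw [ContinuousMultilinearMap.linearDeriv_apply]
  refine sum_congr rfl fun k _ => ?_
  show B _ = B _
  congr 1
  exact funext (apply_update (fun _ => L) _ k v)

end MultilinearMap

open Real

theorem mul_abs_le_mul_exp_mul_sub {l β q x : ℝ} (hl : 0 ≤ l) (hβ : 0 ≤ β) (hlβ : 2 * l ≤ q * β) :
    l * |x| ≤ β * exp (q * x) - l * x := by
  rcases le_or_gt 0 x with hx | hx
  · nlinarith [add_one_le_exp (q * x), abs_of_nonneg hx]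
  · nlinarith [exp_pos (q * x), abs_of_neg hx]

theorem Finite.exists_pos_forall_le {κ : Type*} [Finite κ] {f : κ → ℝ} (hf : ∀ j, 0 < f j) :
    ∃ l > 0, ∀ j, l ≤ f j := by
  rcases isEmpty_or_nonempty κ with hκ | hκ
  · exact ⟨1, one_pos, fun j => isEmptyElim j⟩
  · obtain ⟨j₀, hj₀⟩ := Finite.exists_min f
    exact ⟨f j₀, hf j₀, hj₀⟩

section Objective

variable {ι κ V : Type*} [Fintype ι] [DecidableEq ι] [Fintype κ] [AddCommGroup V] [Module ℝ V]
  (B : MultilinearMap ℝ (fun _ : ι => V) ℝ) (D : κ → V) (l : ℝ)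

noncomputable def equidegObjective (a : κ → ℝ) : ℝ :=
  B (fun _ => ∑ j, exp (a j) • D j) - l * ∑ j, a j

theorem continuous_equidegObjective : Continuous (equidegObjective B D l) := by
  have hcomb : equidegObjective B D l =
      fun a => B (fun _ => Fintype.linearCombination ℝ D (exp ∘ a)) - l * ∑ j, a j := by
    ext a
    simp [equidegObjective, Fintype.linearCombination_apply]
  rw [hcomb]
  exact ((B.continuous_map_const_comp _).comp (by fun_prop)).sub (by fun_prop)

variable {B D l}

theorem mul_sum_abs_le_equidegObjective [Nonempty ι] (hB : ∀ f : ι → κ, 0 ≤ B (fun k => D (f k)))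
    (hl : 0 ≤ l) (hlB : ∀ j, 2 * l ≤ Fintype.card ι * B (fun _ => D j)) (a : κ → ℝ) :
    l * ∑ j, |a j| ≤ equidegObjective B D l a :=
  calc l * ∑ j, |a j| = ∑ j, l * |a j| := mul_sum _ _ _
    _ ≤ ∑ j, (B (fun _ => D j) * exp (Fintype.card ι * a j) - l * a j) :=
      sum_le_sum fun j _ => mul_abs_le_mul_exp_mul_sub hl (hB fun _ => j) (by linarith [hlB j])
    _ = ∑ j, exp (a j) ^ Fintype.card ι * B (fun _ => D j) - l * ∑ j, a j := by
      rw [sum_sub_distrib, mul_sum]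
      exact congrArg₂ _ (sum_congr rfl fun j _ => by rw [← exp_nat_mul, mul_comm]) rfl
    _ ≤ equidegObjective B D l a :=
      sub_le_sub_right (B.sum_pow_mul_le_map_const_sum_smul D hB fun j => (exp_pos _).le) _

theorem exists_forall_equidegObjective_le [Nonempty ι]
    (hB : ∀ f : ι → κ, 0 ≤ B (fun k => D (f k))) (hl : 0 < l)
    (hlB : ∀ j, 2 * l ≤ Fintype.card ι * B (fun _ => D j)) :
    ∃ a, ∀ b, equidegObjective B D l a ≤ equidegObjective B D l b := by
  set R := equidegObjective B D l 0 / l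
  refine (continuous_equidegObjective B D l).exists_forall_le' 0
    (Filter.mem_cocompact.2 ⟨Metric.closedBall 0 R, isCompact_closedBall 0 R, fun a ha => ?_⟩)
  have hnorm : ‖a‖ ≤ ∑ j, |a j| :=
    (pi_norm_le_iff_of_nonneg (sum_nonneg fun j _ => abs_nonneg _)).2 fun j =>
      single_le_sum (f := fun j => |a j|) (fun j _ => abs_nonneg _) (mem_univ j)
  have hRa : R < ∑ j, |a j| := (not_le.1 (ha ∘ mem_closedBall_zero_iff.2)).trans_le hnorm
  calc equidegObjective B D l 0 = l * R := (mul_div_cancel₀ _ hl.ne').symm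
    _ ≤ l * ∑ j, |a j| := mul_le_mul_of_nonneg_left hRa.le hl.le
    _ ≤ equidegObjective B D l a := mul_sum_abs_le_equidegObjective hB hl.le hlB a

theorem sum_map_update_eq_of_forall_equidegObjective_le {a : κ → ℝ}
    (ha : ∀ b, equidegObjective B D l a ≤ equidegObjective B D l b) (i : κ) :
    ∑ k, B (update (fun _ => ∑ j, exp (a j) • D j) k (exp (a i) • D i)) = l := by
  classical
  set L := Fintype.linearCombination ℝ D
  have hγ : HasDerivAt (fun s => update (exp ∘ a) i (exp s)) (exp (a i) • Pi.single i 1) (a i) :=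
    (hasDerivAt_update (exp ∘ a) i (exp (a i))).scomp (a i) (hasDerivAt_exp (a i))
  have hF : ∀ s, equidegObjective B D l (update a i s) =
      B (fun _ => L (update (exp ∘ a) i (exp s))) - l * (s + ∑ j ∈ univ \ {i}, a j) := by
    intro s
    rw [equidegObjective, sum_update_of_mem (mem_univ i), ← comp_update,
      Fintype.linearCombination_apply]
    rfl
  have hderiv := ((B.hasDerivAt_map_const_comp L hγ).fun_sub
    (((hasDerivAt_id (a i)).add_const (∑ j ∈ univ \ {i}, a j)).const_mul l))
  have hmin : IsLocalMin (fun s => equidegObjective B D l (update a i s)) (a i) :=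
    Filter.Eventually.of_forall fun s => by simpa using ha (update a i s)
  simp only [hF] at hmin
  have hcrit := hmin.hasDerivAt_eq_zero hderiv
  have hγa : update (exp ∘ a) i (exp (a i)) = exp ∘ a := update_eq_self i _
  have hLa : L (exp ∘ a) = ∑ j, exp (a j) • D j := Fintype.linearCombination_apply ..
  have hLi : L (exp (a i) • Pi.single i 1) = exp (a i) • D i := by
    rw [map_smul, Fintype.linearCombination_apply_single, one_smul]
  rwa [hγa, hLa, hLi, mul_one, sub_eq_zero] at hcrit

end Objective

theorem stmt_10_general (q r : ℕ) (hq : 0 < q)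
    {V : Type*} [AddCommGroup V] [Module ℝ V]
    (B : MultilinearMap ℝ (fun _ : Fin q => V) ℝ)
    (hBsymm : ∀ (σ : Equiv.Perm (Fin q)) (v : Fin q → V), B (v ∘ σ) = B v)
    (D : Fin r → V)
    (hpos : ∀ i, 0 < B (fun _ => D i))
    (hnonneg : ∀ f : Fin q → Fin r, 0 ≤ B (fun j => D (f j))) :
    ∃ a : Fin r → ℝ, (∀ i, 0 < a i) ∧
      ∀ i, B (Function.update (fun _ => ∑ j, a j • D j) ⟨0, hq⟩ (a i • D i))
        = B (fun _ => ∑ j, a j • D j) / r := by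
  have : Nonempty (Fin q) := ⟨⟨0, hq⟩⟩
  obtain ⟨l, hl, hlB⟩ := Finite.exists_pos_forall_le fun j => mul_pos (Nat.cast_pos.2 hq) (hpos j)
  obtain ⟨a, ha⟩ := exists_forall_equidegObjective_le hnonneg (half_pos hl) fun j => by
    rw [mul_div_cancel₀ l two_ne_zero, Fintype.card_fin]
    exact hlB j
  have hcrit : ∀ i,
      B (update (fun _ => ∑ j, exp (a j) • D j) ⟨0, hq⟩ (exp (a i) • D i)) = l / 2 / q := by
    intro i
    have := sum_map_update_eq_of_forall_equidegObjective_le ha i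
    rw [B.sum_map_update_const_of_symm hBsymm _ _ ⟨0, hq⟩, Fintype.card_fin, nsmul_eq_mul] at this
    rw [← this]
    field_simp
  refine ⟨fun j => exp (a j), fun j => exp_pos _, fun i => ?_⟩
  have hr0 : (r : ℝ) ≠ 0 := Nat.cast_ne_zero.2 i.pos.ne'
  rw [B.map_const_sum_eq_sum_map_update _ ⟨0, hq⟩]
  simp only [hcrit, sum_const, card_univ, Fintype.card_fin, nsmul_eq_mul]
  field_simp

/-- Equidegreelizability (Lemma on Lagrange multipliers).  `V` stands for
`Div(X) ⊗ ℝ` for a nonsingular projective variety `X` of dimension `q`, and `B` for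
the `ℝ`-multilinear extension of the `q`-fold intersection number (a symmetric
multilinear form).  Given divisors `D 1, …, D r` with `D_i^q > 0` for all `i` and all
`q`-fold intersection numbers among the `D_i` nonnegative, there are positive reals
`a_i` such that `D' = ∑ a_i D_i` satisfies `a_i D_i.(D')^{q−1} = (D')^q / r` for
every `i`. -/
theorem stmt_10 (q r : ℕ) (hq : 0 < q) (hr : 0 < r)
    {V : Type*} [AddCommGroup V] [Module ℝ V]
    (B : MultilinearMap ℝ (fun _ : Fin q => V) ℝ)
    (hBsymm : ∀ (σ : Equiv.Perm (Fin q)) (v : Fin q → V), B (v ∘ σ) = B v)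
    (D : Fin r → V)
    (hpos : ∀ i, 0 < B (fun _ => D i))
    (hnonneg : ∀ f : Fin q → Fin r, 0 ≤ B (fun j => D (f j))) :
    ∃ a : Fin r → ℝ, (∀ i, 0 < a i) ∧
      ∀ i, B (Function.update (fun _ => ∑ j, a j • D j) ⟨0, hq⟩ (a i • D i))
        = B (fun _ => ∑ j, a j • D j) / r :=
  stmt_10_general q r hq B hBsymm D hpos hnonneg
end

section
/- Let X = ℙ¹ × ℙ¹, and let D_1 = P_1 × ℙ¹, D_2 = P_2 × ℙ¹, D_3 = ℙ¹ × Q for points P_1 ≠ P_2 and Q. Then there do not exist real numbers a_1, a_2, a_3 > 0 such that, with D = a_1D_1 + a_2D_2 + a_3D_3, one has a_iD_i.D = D²/3 for i = 1, 2, 3. -/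
/-- The example on `X = ℙ¹ × ℙ¹`: `V` stands for `Div(X) ⊗ ℝ` with `B` the
`ℝ`-bilinear extension of the intersection pairing, and `D₁ = P₁ × ℙ¹`,
`D₂ = P₂ × ℙ¹`, `D₃ = ℙ¹ × Q`, so that `D₁.D₂ = D₁² = D₂² = D₃² = 0` and
`D₁.D₃ = D₂.D₃ = 1`.  There are no positive reals `a₁, a₂, a₃` such that
`D = a₁D₁ + a₂D₂ + a₃D₃` satisfies `aᵢDᵢ.D = D²/3` for `i = 1, 2, 3`:
`D₁ + D₂ + D₃` is not equidegreelizable. -/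
theorem stmt_11 {V : Type*} [AddCommGroup V] [Module ℝ V]
    (B : LinearMap.BilinForm ℝ V) (hsymm : ∀ x y, B x y = B y x)
    (D₁ D₂ D₃ : V)
    (h12 : B D₁ D₂ = 0) (h11 : B D₁ D₁ = 0) (h22 : B D₂ D₂ = 0) (h33 : B D₃ D₃ = 0)
    (h13 : B D₁ D₃ = 1) (h23 : B D₂ D₃ = 1) :
    ¬ ∃ a₁ a₂ a₃ : ℝ, 0 < a₁ ∧ 0 < a₂ ∧ 0 < a₃ ∧
      (∀ p ∈ [(a₁, D₁), (a₂, D₂), (a₃, D₃)],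
        B (p.1 • p.2) (a₁ • D₁ + a₂ • D₂ + a₃ • D₃)
          = B (a₁ • D₁ + a₂ • D₂ + a₃ • D₃) (a₁ • D₁ + a₂ • D₂ + a₃ • D₃) / 3) := by
  rintro ⟨a₁, a₂, a₃, ha₁, ha₂, ha₃, h⟩
  have h21 : B D₂ D₁ = 0 := by rw [hsymm]; exact h12
  have h31 : B D₃ D₁ = 1 := by rw [hsymm]; exact h13
  have h32 : B D₃ D₂ = 1 := by rw [hsymm]; exact h23
  have e1 := h (a₁, D₁) (by simp)
  have e3 := h (a₃, D₃) (by simp)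
  simp only [map_add, map_smul, LinearMap.add_apply, LinearMap.smul_apply,
    h12, h11, h22, h33, h13, h23, h21, h31, h32, smul_eq_mul] at e1 e3
  nlinarith [mul_pos ha₁ ha₃, mul_pos ha₂ ha₃]
end

section
/- Let X = ℙⁿ over ℚ with homogeneous coordinates x_0, …, x_n, let S = {∞} be the archimedean place, and let D_i be the hyperplane x_i = 0. Let D = ∑_{i=1}^n a_i D_i with positive integers a_i. Then the set R = {(b : 1 : 1 : ⋯ : 1) : b ∈ ℤ} is an infinite set of (D, S)-integral points on X, i.e. an infinite subset of ℙⁿ(ℚ) avoiding D on which Weil functions for D are bounded at all non-archimedean places. -/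
/-!
All coordinates of `(b : 1 : ⋯ : 1)` are `p`-adic integers and the coordinates cut out by the
`Dᵢ` are equal to `1`, so every term of the Weil function is `aᵢ` times the logarithm of a number
in `[0, 1]`.
-/

/-- Homogeneous coordinates of the point `(b : 1 : 1 : ⋯ : 1)` of `ℙⁿ(ℚ)`. -/
def stdPt (n : ℕ) (b : ℤ) : Fin (n + 1) → ℚ := fun j => if j = 0 then (b : ℚ) else 1

@[simp]
lemma stdPt_zero (n : ℕ) (b : ℤ) : stdPt n b 0 = b := rfl

@[simp]
lemma stdPt_succ (n : ℕ) (b : ℤ) (i : Fin n) : stdPt n b i.succ = 1 :=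
  if_neg i.succ_ne_zero

/-- Comparing the coordinate `x₁ = 1` forces the scalar to be `1`. -/
lemma eq_of_stdPt_eq_smul {n : ℕ} (hn : 1 ≤ n) {b c : ℤ} {t : ℚ}
    (h : stdPt n b = t • stdPt n c) : b = c := by
  obtain ⟨m, rfl⟩ := Nat.exists_eq_add_of_le' hn
  have h₁ := congrFun h (0 : Fin (m + 1)).succ
  rw [Pi.smul_apply, stdPt_succ, stdPt_succ, smul_eq_mul, mul_one] at h₁
  have h₀ := congrFun h 0
  simp only [stdPt_zero, Pi.smul_apply, ← h₁, one_smul] at h₀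
  exact_mod_cast h₀

lemma padicNorm_stdPt_le_one (p : ℕ) [Fact p.Prime] (n : ℕ) (b : ℤ) (j : Fin (n + 1)) :
    padicNorm p (stdPt n b j) ≤ 1 := by
  cases j using Fin.cases with
  | zero => exact padicNorm.of_int b
  | succ i => simp

theorem stmt_19_general (n : ℕ) (hn : 1 ≤ n) (a : Fin n → ℕ) :
    (∀ b c : ℤ, (∃ t : ℚ, t ≠ 0 ∧ stdPt n b = t • stdPt n c) → b = c) ∧
    (∀ (b : ℤ) (i : Fin n), stdPt n b i.succ ≠ 0) ∧
    (∀ p : ℕ, p.Prime → ∀ b : ℤ,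
      ∑ i : Fin n, (a i : ℝ) *
        Real.log
          (((Finset.univ.sup' Finset.univ_nonempty
              fun j : Fin (n + 1) => padicNorm p (stdPt n b j) : ℚ) : ℝ) /
            ((padicNorm p (stdPt n b i.succ) : ℚ) : ℝ)) ≤ 0) := by
  refine ⟨fun b c ⟨_, _, h⟩ => eq_of_stdPt_eq_smul hn h, fun b i => by simp, ?_⟩
  intro p hp b
  have := Fact.mk hp
  set f : Fin (n + 1) → ℚ := fun j => padicNorm p (stdPt n b j)
  set M := Finset.univ.sup' Finset.univ_nonempty f
  have hM₀ : (0 : ℝ) ≤ M := by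
    exact_mod_cast (padicNorm.nonneg _).trans (Finset.le_sup' f (Finset.mem_univ 0))
  have hM₁ : (M : ℝ) ≤ 1 := by
    exact_mod_cast Finset.sup'_le _ _ fun j _ => padicNorm_stdPt_le_one p n b j
  refine Finset.sum_nonpos fun i _ => mul_nonpos_of_nonneg_of_nonpos (Nat.cast_nonneg _) ?_
  simpa using Real.log_nonpos hM₀ hM₁

/-- The sharpness example over `ℤ`: on `X = ℙⁿ_ℚ` with `S = {∞}`, let `Dᵢ` be the
hyperplane `xᵢ = 0` and `D = ∑_{i=1}^n aᵢ Dᵢ` with positive integers `aᵢ`.  Then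
`R = {(b : 1 : ⋯ : 1) : b ∈ ℤ}` is an infinite set of `(D, S)`-integral points:
distinct `b` give distinct projective points (so `R` is infinite), every point of
`R` avoids `D`, and the standard Weil function
`λ_{D,p} = ∑ᵢ aᵢ · log (maxⱼ |xⱼ|_p / |x_i|_p)` is `≤ 0` at every
non-archimedean place `p`. -/
theorem stmt_19 (n : ℕ) (hn : 1 ≤ n) (a : Fin n → ℕ) (ha : ∀ i, 0 < a i) :
    (∀ b c : ℤ, (∃ t : ℚ, t ≠ 0 ∧ stdPt n b = t • stdPt n c) → b = c) ∧
    (∀ (b : ℤ) (i : Fin n), stdPt n b i.succ ≠ 0) ∧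
    (∀ p : ℕ, p.Prime → ∀ b : ℤ,
      ∑ i : Fin n, (a i : ℝ) *
        Real.log
          (((Finset.univ.sup' Finset.univ_nonempty
              fun j : Fin (n + 1) => padicNorm p (stdPt n b j) : ℚ) : ℝ) /
            ((padicNorm p (stdPt n b i.succ) : ℚ) : ℝ)) ≤ 0) :=
  stmt_19_general n hn a
end
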